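/- arXiv:2203.09971 — 2 statements merged into one kernel-verified Lean document; each statement's English description precedes it below -/
import Mathlib

section
/- The Piecewise Uniform mechanism is proportional: for every preference profile V over 3 projects consisting solely of single-minded voters, the output of the Piecewise Uniform mechanism on V equals the proportional division V̄. -/
/-!
With single-minded voters every report on a project `j` is `0` or `1`, so the median on `j` is
the phantom `y_{N_j}(t)`, where `N_j` is the number of supporters of `j`. The Piecewise Uniform
phantoms satisfy `y_k(t) ≤ k / n`, so each median is at most the proportional share `N_j / n`;
since the medians sum to `1` and the shares to at most `1`, they coincide.
-/

open Finset

/-- A division among `m` projects: coordinates in `[0,1]` summing to `1`. -/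
def IsDivision {m : ℕ} (x : Fin m → ℝ) : Prop :=
  (∀ j, 0 ≤ x j ∧ x j ≤ 1) ∧ ∑ j, x j = 1

/-- The ℓ1 distance between two vectors over `Fin m`. -/
noncomputable def l1 {m : ℕ} (x y : Fin m → ℝ) : ℝ := ∑ j, |x j - y j|

/-- The proportional division (coordinatewise mean) of a profile. -/
noncomputable def propDiv {n m : ℕ} (V : Fin n → Fin m → ℝ) : Fin m → ℝ :=
  fun j => (∑ i, V i j) / (n : ℝ)

/-- The `(k+1)`-th smallest element of a multiset of reals. -/
noncomputable def medianAt (s : Multiset ℝ) (k : ℕ) : ℝ :=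
  (s.sort (· ≤ ·)).getD k 0

/-- Voter reports on project `j` together with the `n+1` phantom values `p 0, …, p n`. -/
noncomputable def projValues {n m : ℕ} (V : Fin n → Fin m → ℝ)
    (p : ℕ → ℝ) (j : Fin m) : Multiset ℝ :=
  (Multiset.map (fun i => V i j) Finset.univ.val) +
    (Multiset.map p (Finset.range (n + 1)).val)

/-- The median (the `(n+1)`-th smallest of the `2n+1` values) of the `n` voter reports
on project `j` together with the `n+1` phantom values. -/
noncomputable def phantomMedian {n m : ℕ} (V : Fin n → Fin m → ℝ)
    (p : ℕ → ℝ) (j : Fin m) : ℝ :=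
  medianAt (projValues V p j) n

/-- A phantom system for `n` voters: continuous, weakly increasing functions
`y k : [0,1] → [0,1]`, `k = 0, …, n`, with `y k 0 = 0`, `y k 1 = 1`,
pointwise ordered in `k`. -/
structure PhantomSystem (n : ℕ) where
  y : ℕ → ℝ → ℝ
  contOn : ∀ k ≤ n, ContinuousOn (y k) (Set.Icc 0 1)
  monoOn : ∀ k ≤ n, MonotoneOn (y k) (Set.Icc 0 1)
  mem_Icc : ∀ k ≤ n, ∀ t ∈ Set.Icc (0:ℝ) 1, y k t ∈ Set.Icc (0:ℝ) 1
  map_zero : ∀ k ≤ n, y k 0 = 0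
  map_one : ∀ k ≤ n, y k 1 = 1
  mono_idx : ∀ t ∈ Set.Icc (0:ℝ) 1, ∀ k k', k ≤ k' → k' ≤ n → y k t ≤ y k' t

/-- `f` is the moving phantom mechanism associated with the phantom system `Y`:
on each profile of divisions, for some `t*` making the medians sum to `1`,
it outputs on each project the median of the voter reports and the phantom values. -/
def IsMovingPhantom {n m : ℕ} (f : (Fin n → Fin m → ℝ) → (Fin m → ℝ))
    (Y : PhantomSystem n) : Prop :=
  ∀ V : Fin n → Fin m → ℝ, (∀ i, IsDivision (V i)) →
    ∃ t ∈ Set.Icc (0:ℝ) 1,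
      (∑ j, phantomMedian V (fun k => Y.y k t) j) = 1 ∧
      ∀ j, f V j = phantomMedian V (fun k => Y.y k t) j

/-- Truthfulness of a budget aggregation mechanism: no voter `i` with true peak `V i`
can get an outcome closer (in ℓ1 distance) to her peak by reporting some division `v`
instead of `V i`. -/
def Truthful {n m : ℕ} (f : (Fin n → Fin m → ℝ) → (Fin m → ℝ)) : Prop :=
  ∀ V : Fin n → Fin m → ℝ, (∀ i, IsDivision (V i)) →
    ∀ i : Fin n, ∀ v : Fin m → ℝ, IsDivision v →
      l1 (f V) (V i) ≤ l1 (f (Function.update V i v)) (V i)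

/-- The ℓ1-loss of mechanism `f` on profile `V`. -/
noncomputable def loss {n m : ℕ} (f : (Fin n → Fin m → ℝ) → (Fin m → ℝ))
    (V : Fin n → Fin m → ℝ) : ℝ :=
  l1 (f V) (propDiv V)

/-- The phantom system of the Piecewise Uniform mechanism for `n` voters. -/
noncomputable def puPhantom (n : ℕ) (k : ℕ) (t : ℝ) : ℝ :=
  if t < 1 / 2 then
    (if (k : ℝ) / (n : ℝ) < 1 / 2 then 0 else 4 * t * (k : ℝ) / (n : ℝ) - 2 * t)
  else
    (if (k : ℝ) / (n : ℝ) < 1 / 2 then (k : ℝ) * (2 * t - 1) / (n : ℝ)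
     else (k : ℝ) * (3 - 2 * t) / (n : ℝ) - 2 + 2 * t)

/-- `w` is an output of the Piecewise Uniform mechanism on profile `V`. -/
def IsPUOutcome {n m : ℕ} (V : Fin n → Fin m → ℝ) (w : Fin m → ℝ) : Prop :=
  ∃ t ∈ Set.Icc (0:ℝ) 1,
    (∑ j, phantomMedian V (fun k => puPhantom n k t) j) = 1 ∧
    ∀ j, w j = phantomMedian V (fun k => puPhantom n k t) j

/-- `w` is an output of the Independent Markets mechanism (phantoms `min (k·t) 1`)
on profile `V`. -/
def IsIMOutcome {n m : ℕ} (V : Fin n → Fin m → ℝ) (w : Fin m → ℝ) : Prop :=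
  ∃ t : ℝ, 0 ≤ t ∧
    (∑ j, phantomMedian V (fun k => min ((k : ℝ) * t) 1) j) = 1 ∧
    ∀ j, w j = phantomMedian V (fun k => min ((k : ℝ) * t) 1) j

/-- A single-minded division: it assigns the whole budget to one project. -/
def SingleMindedDiv {m : ℕ} (v : Fin m → ℝ) : Prop := ∃ j, v j = 1

/-- A double-minded division relative to an outcome `w` (three projects): it agrees with
`w` on one project `j`, proposes `1 - w j` on another project, and `0` on the third. -/
def DoubleMindedDiv (w v : Fin 3 → ℝ) : Prop :=
  ∃ j j' : Fin 3, j ≠ j' ∧ v j = w j ∧ v j' = 1 - w j ∧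
    ∀ k, k ≠ j → k ≠ j' → v k = 0

/-- A three-type profile for mechanism `f`: each voter is fully-satisfied,
double-minded, or single-minded. -/
def ThreeTypeProfile {n : ℕ} (f : (Fin n → Fin 3 → ℝ) → (Fin 3 → ℝ))
    (V : Fin n → Fin 3 → ℝ) : Prop :=
  ∀ i, V i = f V ∨ DoubleMindedDiv (f V) (V i) ∨ SingleMindedDiv (V i)

/-- The single-minded division fully supporting project `j`. -/
noncomputable def singleDiv (j : Fin 3) : Fin 3 → ℝ :=
  fun j' => if j' = j then 1 else 0

/-- The double-minded division proposing `x k` on project `k`, `1 - x k` on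
project `j` and `0` on the remaining project. -/
noncomputable def doubleDiv (x : Fin 3 → ℝ) (k j : Fin 3) : Fin 3 → ℝ :=
  fun j' => if j' = k then x k else if j' = j then 1 - x k else 0

/-- A utilitarian mechanism: it always returns a division minimizing the total
ℓ1 distance (social cost) to the voters' proposals. -/
def Utilitarian {n m : ℕ} (f : (Fin n → Fin m → ℝ) → (Fin m → ℝ)) : Prop :=
  ∀ V : Fin n → Fin m → ℝ, (∀ i, IsDivision (V i)) →
    IsDivision (f V) ∧
    ∀ x : Fin m → ℝ, IsDivision x → (∑ i, l1 (V i) (f V)) ≤ ∑ i, l1 (V i) x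

lemma medianAt_eq_getElem {s : Multiset ℝ} {k : ℕ} (hk : k < Multiset.card s) :
    medianAt s k = (s.sort (· ≤ ·))[k]'(by rwa [Multiset.length_sort]) :=
  List.getD_eq_getElem _ _ _

lemma le_card_filter_le_medianAt {s : Multiset ℝ} {k : ℕ} (hk : k < Multiset.card s) :
    k + 1 ≤ Multiset.card (s.filter (· ≤ medianAt s k)) := by
  set l := s.sort (· ≤ ·)
  have hl : k < l.length := by rwa [Multiset.length_sort]
  have hmed : medianAt s k = l[k] := medianAt_eq_getElem hk
  have hs : s = ↑l := (Multiset.sort_eq s _).symm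
  have hsorted : l.Pairwise (· ≤ ·) := Multiset.pairwise_sort s _
  rw [hmed, hs, Multiset.filter_coe, Multiset.coe_card]
  calc k + 1 = (l.take (k + 1)).length := by rw [List.length_take]; omega
    _ = ((l.take (k + 1)).filter (· ≤ l[k])).length := by
        rw [List.filter_eq_self.2]
        intro x hx
        obtain ⟨i, hi, rfl⟩ := List.getElem_of_mem hx
        rw [List.length_take] at hi
        simpa [List.getElem_take] using hsorted.rel_get_of_le
          (a := ⟨i, by omega⟩) (b := ⟨k, hl⟩) (Fin.mk_le_mk.2 (by omega))
    _ ≤ (l.filter (· ≤ l[k])).length := ((List.take_sublist _ _).filter _).length_le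

lemma le_card_filter_medianAt_le {s : Multiset ℝ} {k : ℕ} (hk : k < Multiset.card s) :
    Multiset.card s - k ≤ Multiset.card (s.filter (medianAt s k ≤ ·)) := by
  set l := s.sort (· ≤ ·)
  have hl : k < l.length := by rwa [Multiset.length_sort]
  have hmed : medianAt s k = l[k] := medianAt_eq_getElem hk
  have hs : s = ↑l := (Multiset.sort_eq s _).symm
  have hsorted : l.Pairwise (· ≤ ·) := Multiset.pairwise_sort s _
  rw [hmed, hs, Multiset.filter_coe, Multiset.coe_card]
  calc l.length - k = (l.drop k).length := (List.length_drop ..).symm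
    _ = ((l.drop k).filter (l[k] ≤ ·)).length := by
        rw [List.filter_eq_self.2]
        intro x hx
        obtain ⟨i, hi, rfl⟩ := List.getElem_of_mem hx
        rw [List.length_drop] at hi
        simpa [List.getElem_drop] using hsorted.rel_get_of_le
          (a := ⟨k, hl⟩) (b := ⟨k + i, by omega⟩) (Fin.mk_le_mk.2 (by omega))
    _ ≤ (l.filter (l[k] ≤ ·)).length := ((List.drop_sublist _ _).filter _).length_le

lemma medianAt_eq_of_card_filter_le {s : Multiset ℝ} {n : ℕ} {a : ℝ}
    (hs : Multiset.card s = 2 * n + 1)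
    (hlt : Multiset.card (s.filter (· < a)) ≤ n)
    (hgt : Multiset.card (s.filter (a < ·)) ≤ n) :
    medianAt s n = a := by
  have hn : n < Multiset.card s := by omega
  refine le_antisymm (not_lt.1 fun h => ?_) (not_lt.1 fun h => ?_)
  · have := (le_card_filter_medianAt_le hn).trans
      (Multiset.card_le_card (Multiset.monotone_filter_right s fun x hx => h.trans_le hx))
    omega
  · have := (le_card_filter_le_medianAt hn).trans
      (Multiset.card_le_card (Multiset.monotone_filter_right s fun x hx => hx.trans_lt h))
    omega

lemma card_filter_projValues {n m : ℕ} (V : Fin n → Fin m → ℝ) (p : ℕ → ℝ) (j : Fin m)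
    (q : ℝ → Prop) [DecidablePred q] :
    Multiset.card ((projValues V p j).filter q) =
      #(univ.filter fun i => q (V i j)) + #((range (n + 1)).filter fun k => q (p k)) := by
  simp only [projValues, Multiset.filter_add, Multiset.filter_map, Multiset.card_add,
    Multiset.card_map]
  rfl

lemma phantomMedian_eq_of_zero_or_one {n m : ℕ} {V : Fin n → Fin m → ℝ} {p : ℕ → ℝ}
    {j : Fin m} (hV : ∀ i, V i j = 0 ∨ V i j = 1) (hp : MonotoneOn p (Set.Iic n))
    (hp0 : 0 ≤ p #(univ.filter fun i => V i j = 1))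
    (hp1 : p #(univ.filter fun i => V i j = 1) ≤ 1) :
    phantomMedian V p j = p #(univ.filter fun i => V i j = 1) := by
  set N := #(univ.filter fun i => V i j = 1)
  have hsplit : N + #(univ.filter fun i => ¬V i j = 1) = n :=
    (card_filter_add_card_filter_not _).trans (card_fin n)
  have hlow_voters :
      #(univ.filter fun i => V i j < p N) ≤ #(univ.filter fun i => ¬V i j = 1) :=
    card_le_card <| monotone_filter_right _ fun i _ hi h1 => by rw [h1] at hi; linarith
  have hlow_phantoms : #((range (n + 1)).filter fun k => p k < p N) ≤ N := by
    refine (card_le_card fun k hk => ?_).trans (card_range N).le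
    simp only [mem_filter, mem_range] at hk ⊢
    by_contra! hNk
    exact hk.2.not_ge (hp (Set.mem_Iic.2 (by omega)) (Set.mem_Iic.2 (by omega)) hNk)
  have hhigh_voters : #(univ.filter fun i => p N < V i j) ≤ N :=
    card_le_card <| monotone_filter_right _ fun i _ hi => (hV i).resolve_left fun h0 => by
      rw [h0] at hi; linarith
  have hhigh_phantoms : #((range (n + 1)).filter fun k => p N < p k) ≤ n - N := by
    refine (card_le_card fun k hk => ?_).trans (Nat.card_Ioc N n).le
    simp only [mem_filter, mem_range, mem_Ioc] at hk ⊢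
    by_contra! hkN
    exact hk.2.not_ge (hp (Set.mem_Iic.2 (by omega)) (Set.mem_Iic.2 (by omega)) (by omega))
  apply medianAt_eq_of_card_filter_le
  · rw [projValues, Multiset.card_add, Multiset.card_map, Multiset.card_map, card_val, card_val,
      card_univ, Fintype.card_fin, card_range]
    omega
  · rw [card_filter_projValues]; omega
  · rw [card_filter_projValues]; omega

lemma IsDivision.eq_zero_or_eq_one {m : ℕ} {v : Fin m → ℝ} (hv : IsDivision v) {j₀ : Fin m}
    (hj₀ : v j₀ = 1) (j : Fin m) : v j = 0 ∨ v j = 1 := by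
  rcases eq_or_ne j j₀ with rfl | hj
  · exact Or.inr hj₀
  · left
    have hrest : ∑ k ∈ univ.erase j₀, v k = 0 := by
      linarith [add_sum_erase univ v (mem_univ j₀), hv.2]
    exact (sum_eq_zero_iff_of_nonneg fun k _ => (hv.1 k).1).1 hrest j
      (mem_erase.2 ⟨hj, mem_univ j⟩)

lemma sum_propDiv_le_one {n m : ℕ} {V : Fin n → Fin m → ℝ} (hV : ∀ i, IsDivision (V i)) :
    ∑ j, propDiv V j ≤ 1 := by
  unfold propDiv
  rw [← sum_div, sum_comm]
  simp only [fun i => (hV i).2, sum_const, card_univ, Fintype.card_fin, nsmul_eq_mul, mul_one]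
  exact div_self_le_one _

section puPhantom

variable {n : ℕ} {t : ℝ}

lemma puPhantom_eq (k : ℕ) : puPhantom n k t =
    if t < 1 / 2 then (if (k / n : ℝ) < 1 / 2 then 0 else 2 * t * (2 * (k / n) - 1))
    else if (k / n : ℝ) < 1 / 2 then k / n * (2 * t - 1)
    else k / n * (3 - 2 * t) - 2 + 2 * t := by
  unfold puPhantom
  split_ifs <;> ring

lemma puPhantom_nonneg (ht : t ∈ Set.Icc (0:ℝ) 1) (k : ℕ) : 0 ≤ puPhantom n k t := by
  obtain ⟨ht0, ht1⟩ := ht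
  have hx : (0:ℝ) ≤ k / n := by positivity
  rw [puPhantom_eq]
  split_ifs <;> nlinarith

lemma puPhantom_le_div {k : ℕ} (hk : k ≤ n) (ht : t ∈ Set.Icc (0:ℝ) 1) :
    puPhantom n k t ≤ k / n := by
  obtain ⟨ht0, ht1⟩ := ht
  have hx0 : (0:ℝ) ≤ k / n := by positivity
  have hx : (k / n : ℝ) ≤ 1 := div_le_one_of_le₀ (by exact_mod_cast hk) n.cast_nonneg
  rw [puPhantom_eq]
  split_ifs <;> nlinarith

lemma puPhantom_monotone (ht : t ∈ Set.Icc (0:ℝ) 1) : Monotone fun k => puPhantom n k t := by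
  intro k k' hkk'
  obtain ⟨ht0, ht1⟩ := ht
  have hx : (0:ℝ) ≤ k / n := by positivity
  have hxx' : (k / n : ℝ) ≤ k' / n := by gcongr
  simp only [puPhantom_eq]
  split_ifs <;> nlinarith

lemma phantomMedian_puPhantom_le_propDiv {m : ℕ} {V : Fin n → Fin m → ℝ} {j : Fin m}
    (hV : ∀ i, V i j = 0 ∨ V i j = 1) (ht : t ∈ Set.Icc (0:ℝ) 1) :
    phantomMedian V (fun k => puPhantom n k t) j ≤ propDiv V j := by
  set N := #(univ.filter fun i => V i j = 1)
  have hN : N ≤ n := (card_filter_le _ _).trans_eq (card_fin n)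
  have hsum : ∑ i, V i j = N := by
    rw [← sum_boole]
    exact sum_congr rfl fun i _ => by rcases hV i with h | h <;> simp [h]
  have hle_div : puPhantom n N t ≤ N / n := puPhantom_le_div hN ht
  have hle_one : puPhantom n N t ≤ 1 :=
    hle_div.trans (div_le_one_of_le₀ (by exact_mod_cast hN) n.cast_nonneg)
  rw [phantomMedian_eq_of_zero_or_one hV ((puPhantom_monotone ht).monotoneOn _)
    (puPhantom_nonneg ht N) hle_one]
  unfold propDiv
  rwa [hsum]

end puPhantom

theorem piecewise_uniform_proportional_general {n : ℕ}
    (V : Fin n → Fin 3 → ℝ) (hV : ∀ i, IsDivision (V i))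
    (hsm : ∀ i, ∃ j, V i j = 1)
    (t : ℝ) (ht : t ∈ Set.Icc (0:ℝ) 1)
    (hfeas : ∑ j, phantomMedian V (fun k => puPhantom n k t) j = 1) :
    ∀ j, phantomMedian V (fun k => puPhantom n k t) j = propDiv V j := by
  have hle : ∀ j, phantomMedian V (fun k => puPhantom n k t) j ≤ propDiv V j := fun j =>
    phantomMedian_puPhantom_le_propDiv
      (fun i => (hsm i).elim fun _ h => (hV i).eq_zero_or_eq_one h j) ht
  have hsum : ∑ j, phantomMedian V (fun k => puPhantom n k t) j = ∑ j, propDiv V j :=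
    le_antisymm (sum_le_sum fun j _ => hle j) (hfeas ▸ sum_propDiv_le_one hV)
  exact fun j => (sum_eq_sum_iff_of_le fun j _ => hle j).1 hsum j (mem_univ j)

/-- The Piecewise Uniform mechanism is proportional: on every profile
over 3 projects consisting solely of single-minded voters, its output (the medians
at any feasible `t*`) equals the proportional division. -/
theorem piecewise_uniform_proportional {n : ℕ} (hn : 1 ≤ n)
    (V : Fin n → Fin 3 → ℝ) (hV : ∀ i, IsDivision (V i))
    (hsm : ∀ i, ∃ j, V i j = 1)
    (t : ℝ) (ht : t ∈ Set.Icc (0:ℝ) 1)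
    (hfeas : ∑ j, phantomMedian V (fun k => puPhantom n k t) j = 1) :
    ∀ j, phantomMedian V (fun k => puPhantom n k t) j = propDiv V j :=
  piecewise_uniform_proportional_general V hV hsm t ht hfeas
end

section
/- No moving phantom mechanism can achieve ℓ1-loss less than 1 − 1/m: for every m ≥ 2, every even n ≥ 2, and every moving phantom mechanism f over m projects and n voters, there exists a preference profile V with ℓ(V) = 1 − 1/m. -/
open Finset

/-!
Let `n = h + h`. Half of the voters put the whole budget on one project `j₀`, the other half
report the uniform division. On every project the two halves lie weakly on opposite sides of
`1 / m`, so each median is pinned by the middle phantom `z h` alone, and normalisation of the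
medians forces all of them to equal `1 / m`. The mechanism therefore returns the uniform
division, while the mean is `(e_{j₀} + 1 / m) / 2`, at ℓ1-distance `1 - 1 / m`.
-/

section SortedList

variable {α : Type*} [LinearOrder α]

theorem List.getD_le_of_lt_length_filter_le {l : List α} (hl : l.Pairwise (· ≤ ·))
    {d x : α} {k : ℕ} (hk : k < (l.filter (· ≤ x)).length) : l.getD k d ≤ x := by
  induction l generalizing k with
  | nil => simp at hk
  | cons a t ih =>
    obtain ⟨ha, ht⟩ := List.pairwise_cons.mp hl
    by_cases hax : a ≤ x
    · cases k with
      | zero => simpa using hax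
      | succ k => exact ih ht (by simpa [List.filter_cons, hax] using hk)
    · have : t.filter (· ≤ x) = [] :=
        List.filter_eq_nil_iff.mpr fun b hb hbx => hax ((ha b hb).trans (by simpa using hbx))
      simp [hax, this] at hk

theorem List.le_getD_of_length_filter_lt_le {l : List α} (hl : l.Pairwise (· ≤ ·))
    {d x : α} {k : ℕ} (hk : k < l.length) (hx : (l.filter (· < x)).length ≤ k) :
    x ≤ l.getD k d := by
  induction l generalizing k with
  | nil => simp at hk
  | cons a t ih =>
    obtain ⟨ha, ht⟩ := List.pairwise_cons.mp hl
    cases k with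
    | zero =>
      have : ¬ a < x := fun hax => by simp [hax] at hx
      simpa using this
    | succ k =>
      by_cases hax : a < x
      · exact ih ht (by simpa using hk) (by simpa [List.filter_cons, hax] using hx)
      · have hk' : k < t.length := by simpa using hk
        rw [List.getD_cons_succ, List.getD_eq_getElem _ _ hk']
        exact (not_lt.mp hax).trans (ha _ (List.getElem_mem hk'))

end SortedList

theorem medianAt_le_of_lt_countP {s : Multiset ℝ} {k : ℕ} {x : ℝ}
    (h : k < s.countP (· ≤ x)) : medianAt s k ≤ x := by
  rw [← Multiset.sort_eq s (· ≤ ·), Multiset.coe_countP, List.countP_eq_length_filter] at h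
  exact List.getD_le_of_lt_length_filter_le (Multiset.pairwise_sort s _) (by simpa using h)

theorem le_medianAt_of_countP_le {s : Multiset ℝ} {k : ℕ} {x : ℝ}
    (hk : k < Multiset.card s) (h : s.countP (· < x) ≤ k) : x ≤ medianAt s k := by
  rw [← Multiset.sort_eq s (· ≤ ·), Multiset.coe_countP, List.countP_eq_length_filter] at h
  exact List.le_getD_of_length_filter_lt_le (Multiset.pairwise_sort s _)
    (by rwa [Multiset.length_sort]) (by simpa using h)

section PhantomMedian

variable {n m : ℕ} (V : Fin n → Fin m → ℝ) (z : ℕ → ℝ) (j : Fin m)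

theorem countP_projValues (p : ℝ → Prop) [DecidablePred p] :
    (projValues V z j).countP p = #{i | p (V i j)} + #{k ∈ range (n + 1) | p (z k)} := by
  rw [projValues, Multiset.countP_add, Multiset.countP_map, Multiset.countP_map]
  rfl

theorem card_projValues : Multiset.card (projValues V z j) = n + (n + 1) := by
  simp only [projValues, Multiset.card_add, Multiset.card_map, card_val, card_univ,
    Fintype.card_fin, card_range]

variable {V z j}

theorem phantomMedian_le (hz : MonotoneOn z (Set.Iic n)) {k : ℕ} {c : ℝ} (hk : k ≤ n)
    (hzk : z k ≤ c) (hV : n ≤ #{i | V i j ≤ c} + k) : phantomMedian V z j ≤ c := by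
  have hphantoms : k + 1 ≤ #{k' ∈ range (n + 1) | z k' ≤ c} := by
    simpa using card_le_card (s := range (k + 1)) fun k' hk' => by
      simp only [mem_range] at hk'
      simp only [mem_filter, mem_range]
      refine ⟨by omega, le_trans ?_ hzk⟩
      exact hz (Set.mem_Iic.mpr (by omega)) (Set.mem_Iic.mpr hk) (by omega)
  apply medianAt_le_of_lt_countP
  rw [countP_projValues]
  omega

theorem le_phantomMedian (hz : MonotoneOn z (Set.Iic n)) {k : ℕ} {c : ℝ} (hk : k ≤ n)
    (hzk : c ≤ z k) (hV : #{i | V i j < c} + k ≤ n) : c ≤ phantomMedian V z j := by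
  have hphantoms : #{k' ∈ range (n + 1) | z k' < c} ≤ k := by
    simpa using card_le_card (t := range k) fun k' hk' => by
      simp only [mem_filter, mem_range] at hk'
      simp only [mem_range]
      by_contra hkk'
      refine (hzk.trans ?_).not_gt hk'.2
      exact hz (Set.mem_Iic.mpr hk) (Set.mem_Iic.mpr (by omega)) (by omega)
  apply le_medianAt_of_countP_le (by rw [card_projValues]; omega)
  rw [countP_projValues]
  omega

end PhantomMedian

section SplitProfile

variable {m h : ℕ}

noncomputable def splitProfile (h : ℕ) (j₀ : Fin m) : Fin (h + h) → Fin m → ℝ :=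
  fun i j => if (i : ℕ) < h then (if j = j₀ then 1 else 0) else 1 / m

theorem isDivision_splitProfile (j₀ : Fin m) (i : Fin (h + h)) :
    IsDivision (splitProfile h j₀ i) := by
  have hm : (1 : ℝ) ≤ m := by exact_mod_cast j₀.pos
  have hinv : 0 ≤ 1 / (m : ℝ) ∧ 1 / (m : ℝ) ≤ 1 :=
    ⟨by positivity, div_le_one_of_le₀ hm (by linarith)⟩
  unfold splitProfile
  split_ifs
  · exact ⟨fun j => by dsimp only; split_ifs <;> norm_num, by simp⟩
  · refine ⟨fun _ => hinv, ?_⟩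
    rw [sum_const, card_univ, Fintype.card_fin, nsmul_eq_mul]
    field_simp

theorem card_filter_val_lt_half : #{i : Fin (h + h) | (i : ℕ) < h} = h := by
  rw [Fin.card_filter_val_lt]; omega

theorem card_filter_not_val_lt_half : #{i : Fin (h + h) | ¬ (i : ℕ) < h} = h := by
  rw [filter_not, card_sdiff_of_subset (filter_subset _ _), card_filter_val_lt_half, card_univ,
    Fintype.card_fin]
  omega

theorem propDiv_splitProfile (hh : 0 < h) (j₀ j : Fin m) :
    propDiv (splitProfile h j₀) j = ((if j = j₀ then 1 else 0) + 1 / m) / 2 := by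
  have hh' : (h : ℝ) ≠ 0 := by exact_mod_cast hh.ne'
  simp only [propDiv, splitProfile]
  rw [sum_ite, sum_const, sum_const, card_filter_val_lt_half, card_filter_not_val_lt_half,
    nsmul_eq_mul, nsmul_eq_mul]
  push_cast
  field_simp
  ring

theorem l1_inv_propDiv_splitProfile (hh : 0 < h) (j₀ : Fin m) :
    l1 (fun _ => 1 / m) (propDiv (splitProfile h j₀)) = 1 - 1 / m := by
  have hm : (1 : ℝ) ≤ m := by exact_mod_cast j₀.pos
  have hinv : 1 / (m : ℝ) ≤ 1 := div_le_one_of_le₀ hm (by linarith)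
  have hinv0 : 0 ≤ 1 / (m : ℝ) := by positivity
  have hterm : ∀ j, |1 / m - propDiv (splitProfile h j₀) j|
      = 1 / (2 * m) + if j = j₀ then (1 / 2 - 1 / m : ℝ) else 0 := by
    intro j
    rw [propDiv_splitProfile hh]
    split_ifs
    · rw [abs_of_nonpos (by linarith)]
      ring
    · rw [abs_of_nonneg (by linarith)]
      ring
  simp only [l1, hterm, sum_add_distrib, sum_ite_eq', mem_univ, if_true, sum_const, card_univ,
    Fintype.card_fin, nsmul_eq_mul]
  field_simp
  ring

variable {z : ℕ → ℝ}

theorem phantomMedian_splitProfile_le_inv (hz : MonotoneOn z (Set.Iic (h + h))) (j₀ : Fin m)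
    (hzh : z h ≤ 1 / m) (j : Fin m) :
    phantomMedian (splitProfile h j₀) z j ≤ 1 / m := by
  refine phantomMedian_le hz (by omega) hzh ?_
  calc h + h = #{i : Fin (h + h) | ¬ (i : ℕ) < h} + h := by rw [card_filter_not_val_lt_half]
    _ ≤ #{i | splitProfile h j₀ i j ≤ 1 / m} + h :=
      Nat.add_le_add_right (card_le_card fun i hi => by simp_all [splitProfile, not_lt.mpr]) h

theorem phantomMedian_splitProfile_le (hz : MonotoneOn z (Set.Iic (h + h))) (j₀ : Fin m)
    (hzh : 0 ≤ z h) {j : Fin m} (hj : j ≠ j₀) :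
    phantomMedian (splitProfile h j₀) z j ≤ z h := by
  refine phantomMedian_le hz (by omega) le_rfl ?_
  calc h + h = #{i : Fin (h + h) | (i : ℕ) < h} + h := by rw [card_filter_val_lt_half]
    _ ≤ #{i | splitProfile h j₀ i j ≤ z h} + h :=
      Nat.add_le_add_right (card_le_card fun i hi => by simp_all [splitProfile]) h

theorem inv_le_phantomMedian_splitProfile (hz : MonotoneOn z (Set.Iic (h + h))) (j₀ : Fin m)
    (hzh : 1 / m ≤ z h) (j : Fin m) :
    1 / m ≤ phantomMedian (splitProfile h j₀) z j := by
  refine le_phantomMedian hz (by omega) hzh ?_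
  calc #{i | splitProfile h j₀ i j < 1 / m} + h ≤ #{i : Fin (h + h) | (i : ℕ) < h} + h := by
        refine Nat.add_le_add_right (card_le_card fun i hi => ?_) h
        simp only [splitProfile, mem_filter, mem_univ, true_and] at hi ⊢
        by_contra hih
        simp [hih] at hi
    _ = h + h := by rw [card_filter_val_lt_half]

theorem le_phantomMedian_splitProfile_self (hz : MonotoneOn z (Set.Iic (h + h))) (j₀ : Fin m)
    (hzh : z h ≤ 1) :
    z h ≤ phantomMedian (splitProfile h j₀) z j₀ := by
  refine le_phantomMedian hz (by omega) le_rfl ?_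
  calc #{i | splitProfile h j₀ i j₀ < z h} + h ≤ #{i : Fin (h + h) | ¬ (i : ℕ) < h} + h := by
        refine Nat.add_le_add_right (card_le_card fun i hi => ?_) h
        simp only [splitProfile, mem_filter, mem_univ, true_and] at hi ⊢
        intro hih
        simp only [hih, if_true] at hi
        linarith
    _ = h + h := by rw [card_filter_not_val_lt_half]

/-- If the phantom `z h` sat strictly below (above) `1 / m`, every median would be at most
(at least) `1 / m`, one of them strictly, and the medians could not sum to `1`. -/
theorem phantomMedian_splitProfile_eq (hz : MonotoneOn z (Set.Iic (h + h))) (j₀ : Fin m)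
    (hm : 2 ≤ m) (hzh : z h ∈ Set.Icc (0 : ℝ) 1)
    (hsum : ∑ j, phantomMedian (splitProfile h j₀) z j = 1) (j : Fin m) :
    phantomMedian (splitProfile h j₀) z j = 1 / m := by
  have hsum_inv : ∑ _j : Fin m, (1 / m : ℝ) = 1 := by
    simp only [sum_const, card_univ, Fintype.card_fin, nsmul_eq_mul]
    field_simp
  rcases lt_trichotomy (z h) (1 / m) with hlt | heq | hgt
  · obtain ⟨j₁, hj₁⟩ := @exists_ne _ (Fin.nontrivial_iff_two_le.mpr hm) j₀
    have : ∑ j, phantomMedian (splitProfile h j₀) z j < ∑ _j : Fin m, (1 / m : ℝ) :=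
      sum_lt_sum (fun j _ => ?_) ⟨j₁, mem_univ _, ?_⟩
    · linarith
    · exact phantomMedian_splitProfile_le_inv hz j₀ hlt.le j
    · exact (phantomMedian_splitProfile_le hz j₀ hzh.1 hj₁).trans_lt hlt
  · exact (phantomMedian_splitProfile_le_inv hz j₀ heq.le j).antisymm
      (inv_le_phantomMedian_splitProfile hz j₀ heq.ge j)
  · have : ∑ _j : Fin m, (1 / m : ℝ) < ∑ j, phantomMedian (splitProfile h j₀) z j :=
      sum_lt_sum (fun j _ => ?_) ⟨j₀, mem_univ _, ?_⟩
    · linarith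
    · exact inv_le_phantomMedian_splitProfile hz j₀ hgt.le j
    · exact hgt.trans_le (le_phantomMedian_splitProfile_self hz j₀ hzh.2)

end SplitProfile

/-- No moving phantom mechanism achieves ℓ1-loss below `1 - 1/m`: for
every `m ≥ 2`, every even `n ≥ 2` and every moving phantom mechanism, there is a
profile with loss exactly `1 - 1/m`. -/
theorem moving_phantom_lower_bound {m n : ℕ} (hm : 2 ≤ m) (hn : 2 ≤ n) (he : Even n)
    (f : (Fin n → Fin m → ℝ) → (Fin m → ℝ)) (Y : PhantomSystem n)
    (hf : IsMovingPhantom f Y) :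
    ∃ V : Fin n → Fin m → ℝ, (∀ i, IsDivision (V i)) ∧
      l1 (f V) (propDiv V) = 1 - 1 / (m : ℝ) := by
  obtain ⟨h, rfl⟩ := he
  let j₀ : Fin m := ⟨0, by omega⟩
  let V := splitProfile h j₀
  obtain ⟨t, ht, hsum, hfV⟩ := hf V (isDivision_splitProfile j₀)
  have hz : MonotoneOn (fun k => Y.y k t) (Set.Iic (h + h)) :=
    fun k _ k' hk' hkk' => Y.mono_idx t ht k k' hkk' hk'
  have hmed := phantomMedian_splitProfile_eq hz j₀ hm (Y.mem_Icc h (by omega) t ht) hsum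
  refine ⟨V, isDivision_splitProfile j₀, ?_⟩
  rw [show f V = fun _ => (1 / m : ℝ) from funext fun j => (hfV j).trans (hmed j)]
  exact l1_inv_propDiv_splitProfile (by omega) j₀
end
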